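/- Let a, c, u ∈ ℂ with c not a nonpositive integer and u ≠ −1/2, and set δ := (1/2)(a − c + 1/2)(a − 1/2). Then for every complex x with |x| < 1: −x(1−x)·∂ₓF(a+u, a−u; c; x) + (−(1/2 − a)x − (1/2)c + 1/2 + (u + 1/2)(x − 1/2) + δ/(u + 1/2))·F(a+u, a−u; c; x) = ((a+u)(a−c−u)/(2(u + 1/2)))·F(a+u+1, a−u−1; c; x). -/

import Mathlib

/-!
The hypergeometric series has radius of convergence at least one (infinite when it terminates),
so on the unit disc `F` and `F'` are power series with coefficients `fₙ` and `(n + 1) fₙ₊₁`.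
With `A = a + u` and `B = a - u` we have `A - B + 1 = 2 (u + 1/2)`, and after multiplying by
this factor the identity becomes the contiguous relation
`(A - B + 1) (A x F - x (1 - x) F') + A (B - c) F = A (B - c) F(A + 1, B - 1; c; x)`.
Comparing coefficients of `x ^ (n + 1)` and using `(n + 1) (c + n) fₙ₊₁ = (A + n) (B + n) fₙ`
reduces it to a polynomial identity in `n`.
-/

/-- The Gauss hypergeometric series F(a,b;c;x) = ∑ (a)ₖ(b)ₖ/((c)ₖ k!) xᵏ. -/
noncomputable def gauss2F1 (a b c x : ℂ) : ℂ :=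
  ∑' k : ℕ, ((ascPochhammer ℂ k).eval a * (ascPochhammer ℂ k).eval b)
    / ((ascPochhammer ℂ k).eval c * (Nat.factorial k : ℂ)) * x ^ k

theorem FormalMultilinearSeries.hasSum_deriv_sum {𝕜 F : Type*} [NontriviallyNormedField 𝕜]
    [NormedAddCommGroup F] [NormedSpace 𝕜 F] [CompleteSpace F]
    (p : FormalMultilinearSeries 𝕜 𝕜 F) {x : 𝕜} (hx : ‖x‖ₑ < p.radius) :
    HasSum (fun n : ℕ => x ^ n • (n + 1) • p.coeff (n + 1)) (deriv p.sum x) := by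
  have hsum := p.derivSeries.hasSum (x := x)
    (by simpa using hx.trans_le p.radius_le_radius_derivSeries)
  rw [(p.hasFDerivAt_sum hx).hasDerivAt.deriv]
  simpa [derivSeries_coeff_one] using (ContinuousLinearMap.apply 𝕜 F (1 : 𝕜)).hasSum hsum

theorem ascPochhammer_succ_eval_left {S : Type*} [CommSemiring S] (n : ℕ) (s : S) :
    (ascPochhammer S (n + 1)).eval s = s * (ascPochhammer S n).eval (s + 1) := by
  simp [ascPochhammer_succ_left, Polynomial.eval_comp]

section Coefficients

variable {𝕂 : Type*} [Field 𝕂]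

theorem ordinaryHypergeometricCoefficient_zero (a b c : 𝕂) :
    ordinaryHypergeometricCoefficient a b c 0 = 1 := by
  simp [ordinaryHypergeometricCoefficient]

theorem ordinaryHypergeometricCoefficient_succ (a b c : 𝕂) (n : ℕ) :
    ordinaryHypergeometricCoefficient a b c (n + 1) =
      ordinaryHypergeometricCoefficient a b c n * ((a + n) * (b + n)) * ((n + 1) * (c + n))⁻¹ := by
  simp only [ordinaryHypergeometricCoefficient, ascPochhammer_succ_eval, Nat.factorial_succ,
    Nat.cast_mul, mul_inv]
  push_cast
  ring

theorem ordinaryHypergeometricCoefficient_add_one_sub_one [CharZero 𝕂] (a b c : 𝕂) (n : ℕ)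
    (hc : c + n ≠ 0) :
    (n + 1) * (c + n) * (a * ordinaryHypergeometricCoefficient (a + 1) (b - 1) c (n + 1)) =
      (a + n) * (a + n + 1) * (b - 1) * ordinaryHypergeometricCoefficient a b c n := by
  have ha : a * (ascPochhammer 𝕂 (n + 1)).eval (a + 1) =
      (ascPochhammer 𝕂 n).eval a * (a + n) * (a + n + 1) := by
    rw [← ascPochhammer_succ_eval_left, ascPochhammer_succ_eval, ascPochhammer_succ_eval]
    push_cast
    ring
  have hb : (ascPochhammer 𝕂 (n + 1)).eval (b - 1) = (b - 1) * (ascPochhammer 𝕂 n).eval b := by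
    rw [ascPochhammer_succ_eval_left, sub_add_cancel]
  have hn : (n + 1 : 𝕂) ≠ 0 := by exact_mod_cast n.succ_ne_zero
  have hexpand : a * ordinaryHypergeometricCoefficient (a + 1) (b - 1) c (n + 1) =
      ((n + 1).factorial : 𝕂)⁻¹ * (a * (ascPochhammer 𝕂 (n + 1)).eval (a + 1)) *
        (ascPochhammer 𝕂 (n + 1)).eval (b - 1) * ((ascPochhammer 𝕂 (n + 1)).eval c)⁻¹ := by
    simp only [ordinaryHypergeometricCoefficient]
    ring
  rw [hexpand, ha, hb, ascPochhammer_succ_eval n c, Nat.factorial_succ, Nat.cast_mul, mul_inv,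
    mul_inv]
  push_cast
  field_simp

theorem ordinaryHypergeometricCoefficient_contiguous [CharZero 𝕂] (a b c : 𝕂) (n : ℕ)
    (hc : c + n ≠ 0) :
    (a - b + 1) * (a * ordinaryHypergeometricCoefficient a b c n -
        ((n + 1) * ordinaryHypergeometricCoefficient a b c (n + 1) -
          n * ordinaryHypergeometricCoefficient a b c n)) +
      a * (b - c) * ordinaryHypergeometricCoefficient a b c (n + 1) =
    (b - c) * (a * ordinaryHypergeometricCoefficient (a + 1) (b - 1) c (n + 1)) := by
  have hn : (n + 1 : 𝕂) ≠ 0 := by exact_mod_cast n.succ_ne_zero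
  have hsucc : (n + 1) * (c + n) * ordinaryHypergeometricCoefficient a b c (n + 1) =
      (a + n) * (b + n) * ordinaryHypergeometricCoefficient a b c n := by
    rw [ordinaryHypergeometricCoefficient_succ]
    field_simp
  apply mul_left_cancel₀ (mul_ne_zero hn hc)
  linear_combination (a * (b - c) - (a - b + 1) * (n + 1)) * hsucc -
    (b - c) * ordinaryHypergeometricCoefficient_add_one_sub_one a b c n hc

end Coefficients

theorem hasSum_mul_one_sub_mul_deriv {R : Type*} [CommRing R] [TopologicalSpace R]
    [IsTopologicalRing R] {f : ℕ → R} {x F' : R}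
    (hF' : HasSum (fun n : ℕ => (n + 1) * f (n + 1) * x ^ n) F') :
    HasSum (fun n : ℕ => ((n + 1) * f (n + 1) - n * f n) * x ^ (n + 1)) (x * (1 - x) * F') := by
  have hshift : HasSum (fun n : ℕ => (n + 1) * f (n + 1) * x ^ (n + 1)) (x * F') := by
    rw [show (fun n : ℕ => (n + 1) * f (n + 1) * x ^ (n + 1)) =
      fun n => x * ((n + 1) * f (n + 1) * x ^ n) from funext fun n => by ring]
    exact hF'.mul_left x
  have heuler : HasSum (fun n : ℕ => n * f n * x ^ n) (x * F') := by
    simpa using (hasSum_nat_add_iff' 1).mp (by simpa using hshift)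
  rw [show x * (1 - x) * F' = x * F' - x * (x * F') by ring,
    show (fun n : ℕ => ((n + 1) * f (n + 1) - n * f n) * x ^ (n + 1)) =
      fun n => (n + 1) * f (n + 1) * x ^ (n + 1) - x * (n * f n * x ^ n) from
      funext fun n => by ring]
  exact hshift.sub (heuler.mul_left x)

section RCLike

variable {𝕂 : Type*} [RCLike 𝕂]

theorem one_le_ordinaryHypergeometricSeries_radius (𝔸 : Type*) [NormedDivisionRing 𝔸]
    [NormedAlgebra 𝕂 𝔸] (a b c : 𝕂) : 1 ≤ (ordinaryHypergeometricSeries 𝔸 a b c).radius := by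
  by_cases h : ∀ k : ℕ, (k : 𝕂) ≠ -a ∧ (k : 𝕂) ≠ -b ∧ (k : 𝕂) ≠ -c
  · exact (ordinaryHypergeometricSeries_radius_eq_one 𝔸 a b c h).ge
  simp only [not_forall, not_and_or, not_not] at h
  obtain ⟨k, hk | hk | hk⟩ := h
  · obtain rfl : a = -k := by rw [hk, neg_neg]
    simp [ordinaryHypergeometric_radius_top_of_neg_nat₁]
  · obtain rfl : b = -k := by rw [hk, neg_neg]
    simp [ordinaryHypergeometric_radius_top_of_neg_nat₂]
  · obtain rfl : c = -k := by rw [hk, neg_neg]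
    simp [ordinaryHypergeometric_radius_top_of_neg_nat₃]

theorem enorm_lt_ordinaryHypergeometricSeries_radius {𝔸 : Type*} [NormedDivisionRing 𝔸]
    [NormedAlgebra 𝕂 𝔸] (a b c : 𝕂) {x : 𝔸} (hx : ‖x‖ < 1) :
    ‖x‖ₑ < (ordinaryHypergeometricSeries 𝔸 a b c).radius := by
  refine lt_of_lt_of_le ?_ (one_le_ordinaryHypergeometricSeries_radius 𝔸 a b c)
  rw [← ofReal_norm]
  exact ENNReal.ofReal_lt_one.mpr hx

theorem hasSum_ordinaryHypergeometric (a b c : 𝕂) {x : 𝕂} (hx : ‖x‖ < 1) :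
    HasSum (fun n : ℕ => ordinaryHypergeometricCoefficient a b c n * x ^ n)
      (ordinaryHypergeometric a b c x) := by
  simpa [ordinaryHypergeometric, ordinaryHypergeometricSeries,
    FormalMultilinearSeries.apply_eq_pow_smul_coeff, mul_comm]
    using (ordinaryHypergeometricSeries 𝕂 a b c).hasSum
      (by simpa using enorm_lt_ordinaryHypergeometricSeries_radius a b c hx)

theorem hasSum_deriv_ordinaryHypergeometric (a b c : 𝕂) {x : 𝕂} (hx : ‖x‖ < 1) :
    HasSum (fun n : ℕ => (n + 1) * ordinaryHypergeometricCoefficient a b c (n + 1) * x ^ n)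
      (deriv (ordinaryHypergeometric a b c) x) := by
  rw [show ordinaryHypergeometric a b c = (ordinaryHypergeometricSeries 𝕂 a b c).sum from rfl]
  simpa [ordinaryHypergeometricSeries, mul_comm, mul_left_comm]
    using (ordinaryHypergeometricSeries 𝕂 a b c).hasSum_deriv_sum
      (enorm_lt_ordinaryHypergeometricSeries_radius a b c hx)

theorem ordinaryHypergeometric_contiguous (a b c : 𝕂) (hc : ∀ n : ℕ, c ≠ -n) {x : 𝕂}
    (hx : ‖x‖ < 1) :
    (a - b + 1) * (a * x * ordinaryHypergeometric a b c x -
        x * (1 - x) * deriv (ordinaryHypergeometric a b c) x) +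
      a * (b - c) * ordinaryHypergeometric a b c x =
    a * (b - c) * ordinaryHypergeometric (a + 1) (b - 1) c x := by
  have hF := hasSum_ordinaryHypergeometric a b c hx
  have hθ := hasSum_mul_one_sub_mul_deriv (hasSum_deriv_ordinaryHypergeometric a b c hx)
  have hFtail := (hasSum_nat_add_iff' 1).mpr hF
  have hGtail := (hasSum_nat_add_iff' 1).mpr (hasSum_ordinaryHypergeometric (a + 1) (b - 1) c hx)
  simp only [Finset.sum_range_one, ordinaryHypergeometricCoefficient_zero, pow_zero, mul_one]
    at hFtail hGtail
  have hLHS := (((hF.mul_left (a * x)).sub hθ).mul_left (a - b + 1)).add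
    (hFtail.mul_left (a * (b - c)))
  have hcoef (n : ℕ) := ordinaryHypergeometricCoefficient_contiguous a b c n
    fun h => hc n (eq_neg_of_add_eq_zero_left h)
  rw [show (fun n : ℕ => _) = fun n : ℕ => a * (b - c) *
      (ordinaryHypergeometricCoefficient (a + 1) (b - 1) c (n + 1) * x ^ (n + 1)) from
    funext fun n => by linear_combination x ^ (n + 1) * hcoef n] at hLHS
  linear_combination hLHS.unique (hGtail.mul_left (a * (b - c)))

end RCLike

theorem gauss2F1_eq_ordinaryHypergeometric (a b c : ℂ) :
    gauss2F1 a b c = ordinaryHypergeometric a b c := by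
  funext x
  rw [gauss2F1, ordinaryHypergeometric_eq_tsum]
  refine tsum_congr fun n => ?_
  rw [smul_eq_mul, div_eq_mul_inv, mul_inv]
  ring

/-- Shift operator relation (3.13) of the paper, with δ = (1/2)(a−c+1/2)(a−1/2):
−x(1−x)∂ₓF(a+u,a−u;c;x) + (−(1/2−a)x − c/2 + 1/2 + (u+1/2)(x−1/2) + δ/(u+1/2))F(a+u,a−u;c;x)
 = ((a+u)(a−c−u)/(2(u+1/2)))F(a+u+1,a−u−1;c;x). -/
theorem stmt_17 (a c u : ℂ) (hc : ∀ n : ℕ, c ≠ -(n : ℂ)) (hu : u ≠ -(1/2))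
    (δ : ℂ) (hδ : δ = (1/2) * (a - c + 1/2) * (a - 1/2)) :
    ∀ x : ℂ, ‖x‖ < 1 →
      -(x * (1 - x)) * deriv (fun y => gauss2F1 (a + u) (a - u) c y) x
        + (-((1/2 - a) * x) - (1/2) * c + 1/2 + (u + 1/2) * (x - 1/2) + δ / (u + 1/2))
          * gauss2F1 (a + u) (a - u) c x
      = ((a + u) * (a - c - u) / (2 * (u + 1/2))) * gauss2F1 (a + u + 1) (a - u - 1) c x := by
  intro x hx
  have hu' : u + 1/2 ≠ 0 := fun h => hu (eq_neg_of_add_eq_zero_left h)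
  have h2u : 2 * (u + 1/2) ≠ 0 := mul_ne_zero two_ne_zero hu'
  have hK : 2 * (u + 1/2) * ((a + u) * (a - c - u) / (2 * (u + 1/2))) = (a + u) * (a - c - u) :=
    mul_div_cancel₀ _ h2u
  -- `δ` is chosen so that the constant term of the bracket is `A (B - c) / (A - B + 1)`.
  have hbracket : -((1/2 - a) * x) - (1/2) * c + 1/2 + (u + 1/2) * (x - 1/2) + δ / (u + 1/2) =
      (a + u) * (a - c - u) / (2 * (u + 1/2)) + (a + u) * x := by
    rw [hδ, mul_comm 2, ← div_div]
    linear_combination (c/2 + u/2 - 1/4) * mul_inv_cancel₀ hu'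
  have key := ordinaryHypergeometric_contiguous (a + u) (a - u) c hc hx
  rw [show a + u - (a - u) + 1 = 2 * (u + 1/2) by ring] at key
  rw [gauss2F1_eq_ordinaryHypergeometric, gauss2F1_eq_ordinaryHypergeometric, hbracket]
  eta_reduce
  apply mul_left_cancel₀ h2u
  linear_combination key + (ordinaryHypergeometric (a + u) (a - u) c x -
    ordinaryHypergeometric (a + u + 1) (a - u - 1) c x) * hK
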